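/- As p → 0⁺, the ratio t^(D)(N_opt^(D), p) / t^(S)(N_opt^(S), p) converges to √2, where N_opt^(D) and N_opt^(S) are the integer minimizers of t^(D)(·,p) = 1 - (1-p)^N + (1 - p(1-p)^(N-1))/N and t^(S)(·,p) = 2 - (1-p) + (2(1-p) - (1-(1-p)^(N+1))/p)/N respectively. -/

import Mathlib

open Filter

noncomputable def tDn (N : ℕ) (p : ℝ) : ℝ :=
  1 - (1 - p) ^ N + (1 - p * (1 - p) ^ (N - 1)) / (N : ℝ)

noncomputable def tSn (N : ℕ) (p : ℝ) : ℝ :=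
  2 - (1 - p) + (2 * (1 - p) - (1 - (1 - p) ^ (N + 1)) / p) / (N : ℝ)

/-!
With `x = N p`, Bernoulli's inequality gives `1 - (1 - p) ^ N ≥ x / (1 + x)`. For Sterrett, write
`t^(S)(N, p) = p + (1 - 2p + ∑_{k=1}^N (1 - (1 - p) ^ k)) / N`; the average of this increasing concave
sequence is at least half its last term. So both costs are bounded below by `x / (1 + x) + c / x`
(halved for Sterrett, with `c = p (1 - p)` resp. `2 p (1 - 2 p)`), whose minimum over `x > 0` is
`2 √c - c`. Conversely `N = ⌈1 / √p⌉` resp. `⌈√2 / √p⌉` costs at most `2 √p + O(p)` resp.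
`√(2 p) + O(p)`. Hence the optimal costs are `2 √p (1 + o(1))` and `√(2 p) (1 + o(1))`.
-/

open Finset Topology

section Bernoulli

variable {p : ℝ}

lemma one_sub_pow_mul_one_add_mul_le_one (hp : 0 ≤ p) (hp1 : p ≤ 1) (n : ℕ) :
    (1 - p) ^ n * (1 + n * p) ≤ 1 :=
  calc (1 - p) ^ n * (1 + n * p) ≤ (1 - p) ^ n * (1 + p) ^ n :=
        mul_le_mul_of_nonneg_left (one_add_mul_le_pow (by linarith) n) (pow_nonneg (by linarith) n)
    _ = (1 - p ^ 2) ^ n := by rw [← mul_pow]; ring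
    _ ≤ 1 := pow_le_one₀ (by nlinarith) (by nlinarith)

lemma mul_div_one_add_le_one_sub_pow (hp : 0 ≤ p) (hp1 : p ≤ 1) (n : ℕ) :
    n * p / (1 + n * p) ≤ 1 - (1 - p) ^ n := by
  rw [div_le_iff₀ (by positivity)]
  linarith [one_sub_pow_mul_one_add_mul_le_one hp hp1 n]

lemma one_sub_pow_le_mul (hp : p ≤ 2) (n : ℕ) : 1 - (1 - p) ^ n ≤ n * p := by
  have := one_add_mul_le_pow (a := -p) (by linarith) n
  rw [← sub_eq_add_neg] at this
  linarith

lemma sum_one_sub_pow_le (hp : p ≤ 2) (N : ℕ) :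
    ∑ k ∈ range N, (1 - (1 - p) ^ (k + 1)) ≤ N * (N + 1) / 2 * p := by
  induction N with
  | zero => simp
  | succ N ih =>
    rw [sum_range_succ]
    have := one_sub_pow_le_mul hp (N + 1)
    push_cast at this ⊢
    linarith

lemma mul_one_sub_pow_le_two_mul_sum (hp : 0 ≤ p) (hp1 : p ≤ 1) (N : ℕ) :
    N * (1 - (1 - p) ^ N) ≤ 2 * ∑ k ∈ range N, (1 - (1 - p) ^ (k + 1)) := by
  induction N with
  | zero => simp
  | succ N ih =>
    rw [sum_range_succ, pow_succ]
    -- the step reduces to `(1 - p) ^ N * (1 + (N - 1) * p) ≤ 1`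
    have hbound := one_sub_pow_mul_one_add_mul_le_one hp hp1 N
    have hnonneg : 0 ≤ (1 - p) ^ N * p := mul_nonneg (pow_nonneg (by linarith) N) hp
    push_cast
    nlinarith

end Bernoulli

/-- The difference of the two sides, multiplied by `x * (1 + x)`, is `(x * (1 - s) - s) ^ 2`. -/
lemma two_mul_sub_sq_le_div_add_sq_div {x : ℝ} (hx : 0 < x) (s : ℝ) :
    2 * s - s ^ 2 ≤ x / (1 + x) + s ^ 2 / x := by
  rw [div_add_div _ _ (by positivity) hx.ne', le_div_iff₀ (by positivity)]
  nlinarith [sq_nonneg (x * (1 - s) - s)]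

lemma ceil_div_mul_bounds {a u : ℝ} (ha : 0 < a) (hu : 0 < u) :
    0 < ⌈a / u⌉₊ ∧ a ≤ ⌈a / u⌉₊ * u ∧ ⌈a / u⌉₊ * u < a + u := by
  refine ⟨Nat.ceil_pos.2 (by positivity), ?_, ?_⟩
  · rw [← div_le_iff₀ hu]
    exact Nat.le_ceil _
  · have := Nat.ceil_lt_add_one (div_pos ha hu).le
    rwa [← lt_div_iff₀ hu, add_div, div_self hu.ne']

section Dorfman

variable {p : ℝ}

lemma tDn_le (hp : 0 ≤ p) (hp1 : p ≤ 1) (N : ℕ) : tDn N p ≤ N * p + 1 / N := by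
  have hnum : 1 - p * (1 - p) ^ (N - 1) ≤ 1 :=
    sub_le_self _ (mul_nonneg hp (pow_nonneg (by linarith) _))
  have := one_sub_pow_le_mul (by linarith : p ≤ 2) N
  unfold tDn
  gcongr

lemma tDn_ge (hp : 0 < p) (hp1 : p < 1) {N : ℕ} (hN : 0 < N) :
    2 * (√p * √(1 - p)) - p * (1 - p) ≤ tDn N p := by
  have hN' : (0 : ℝ) < N := by exact_mod_cast hN
  have hx : 0 < N * p := by positivity
  have hnum : (1 - p) / N ≤ (1 - p * (1 - p) ^ (N - 1)) / N := by
    gcongr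
    nlinarith [pow_le_one₀ (by linarith : 0 ≤ 1 - p) (by linarith : 1 - p ≤ 1) (n := N - 1)]
  have hs : (√p * √(1 - p)) ^ 2 = p * (1 - p) := by
    rw [mul_pow, Real.sq_sqrt hp.le, Real.sq_sqrt (by linarith)]
  have hkey := two_mul_sub_sq_le_div_add_sq_div hx (√p * √(1 - p))
  rw [hs, show p * (1 - p) / (N * p) = (1 - p) / N by field_simp] at hkey
  have := mul_div_one_add_le_one_sub_pow hp.le hp1.le N
  unfold tDn
  linarith

lemma tDn_ceil_le (hp : 0 < p) (hp1 : p ≤ 1) :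
    tDn ⌈1 / √p⌉₊ p ≤ 2 * √p + p := by
  have hu := Real.sqrt_pos.2 hp
  obtain ⟨hpos, hlo, hhi⟩ := ceil_div_mul_bounds one_pos hu
  have hN : (0 : ℝ) < ⌈1 / √p⌉₊ := by exact_mod_cast hpos
  have hinv : 1 / (⌈1 / √p⌉₊ : ℝ) ≤ √p := by
    rw [div_le_iff₀ hN]; linarith
  have hsq := Real.sq_sqrt hp.le
  have := tDn_le hp.le hp1 ⌈1 / √p⌉₊
  nlinarith

end Dorfman

section Sterrett

variable {p : ℝ}

lemma tSn_eq (hp : 0 < p) {N : ℕ} (hN : N ≠ 0) :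
    tSn N p = p + (1 - 2 * p + ∑ k ∈ range N, (1 - (1 - p) ^ (k + 1))) / N := by
  have hgeom : (1 - (1 - p) ^ (N + 1)) / p = ∑ k ∈ range (N + 1), (1 - p) ^ k := by
    rw [geom_sum_eq (by linarith)]
    field_simp [hp.ne']
    ring
  have hN' : (N : ℝ) ≠ 0 := by exact_mod_cast hN
  rw [tSn, hgeom, sum_range_succ', sum_sub_distrib, sum_const, card_range, nsmul_eq_mul]
  field_simp
  ring

lemma tSn_le (hp : 0 < p) (hp2 : p ≤ 2) {N : ℕ} (hN : N ≠ 0) :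
    tSn N p ≤ 1 / N + N * p / 2 + 3 * p / 2 := by
  have hN' : (0 : ℝ) < N := by positivity
  have hsum := sum_one_sub_pow_le hp2 N
  rw [tSn_eq hp hN]
  have : (1 - 2 * p + ∑ k ∈ range N, (1 - (1 - p) ^ (k + 1))) / N
      ≤ (1 + N * (N + 1) / 2 * p) / N := by
    gcongr
    linarith
  have hid : (1 + N * (N + 1) / 2 * p) / N = 1 / N + N * p / 2 + p / 2 := by
    field_simp
    ring
  linarith

lemma tSn_ge (hp : 0 < p) (hp2 : p ≤ 1 / 2) {N : ℕ} (hN : 0 < N) :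
    √p * √(2 * (1 - 2 * p)) ≤ tSn N p := by
  have hN' : (0 : ℝ) < N := by exact_mod_cast hN
  have hx : 0 < N * p := by positivity
  rw [tSn_eq hp hN.ne', add_div]
  set S := ∑ k ∈ range N, (1 - (1 - p) ^ (k + 1))
  have hS : N * p / (1 + N * p) / 2 ≤ S / N := by
    rw [le_div_iff₀ hN']
    have := mul_le_mul_of_nonneg_left
      (mul_div_one_add_le_one_sub_pow hp.le (by linarith) N) hN'.le
    linarith [mul_one_sub_pow_le_two_mul_sum hp.le (by linarith) N]
  have hs : (√p * √(2 * (1 - 2 * p))) ^ 2 = 2 * p * (1 - 2 * p) := by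
    rw [mul_pow, Real.sq_sqrt hp.le, Real.sq_sqrt (by linarith)]
    ring
  have hkey := two_mul_sub_sq_le_div_add_sq_div hx (√p * √(2 * (1 - 2 * p)))
  rw [hs, show 2 * p * (1 - 2 * p) / (N * p) = 2 * ((1 - 2 * p) / N) by field_simp] at hkey
  nlinarith

lemma tSn_ceil_le (hp : 0 < p) (hp2 : p ≤ 2) :
    tSn ⌈√2 / √p⌉₊ p ≤ √2 * √p + 2 * p := by
  have hu := Real.sqrt_pos.2 hp
  have h2 : (0 : ℝ) < √2 := by positivity
  obtain ⟨hpos, hlo, hhi⟩ := ceil_div_mul_bounds h2 hu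
  have hN : (0 : ℝ) < ⌈√2 / √p⌉₊ := by exact_mod_cast hpos
  have hsq2 := Real.sq_sqrt (zero_le_two : (0 : ℝ) ≤ 2)
  have hinv : 1 / (⌈√2 / √p⌉₊ : ℝ) ≤ √2 * √p / 2 := by
    rw [div_le_iff₀ hN]; nlinarith
  have hsq := Real.sq_sqrt hp.le
  have := tSn_le hp hp2 hpos.ne'
  nlinarith

end Sterrett

lemma tendsto_div_of_squeeze {l : Filter ℝ} {F g a b : ℝ → ℝ} {c : ℝ}
    (ha : Tendsto a l (𝓝 c)) (hb : Tendsto b l (𝓝 c)) (hg : ∀ᶠ p in l, 0 < g p)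
    (hF : ∀ᶠ p in l, g p * a p ≤ F p ∧ F p ≤ g p * b p) :
    Tendsto (fun p => F p / g p) l (𝓝 c) := by
  refine tendsto_of_tendsto_of_tendsto_of_le_of_le' ha hb ?_ ?_ <;>
    filter_upwards [hg, hF] with p hgp hFp
  · exact (le_div_iff₀' hgp).2 hFp.1
  · exact (div_le_iff₀' hgp).2 hFp.2

lemma tendsto_tDn_div_sqrt {ND : ℝ → ℕ}
    (hND : ∀ p ∈ Set.Ioo (0:ℝ) 1, 0 < ND p ∧ ∀ M : ℕ, 0 < M → tDn (ND p) p ≤ tDn M p) :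
    Tendsto (fun p => tDn (ND p) p / √p) (𝓝[>] 0) (𝓝 2) := by
  refine tendsto_div_of_squeeze (a := fun p => 2 * √(1 - p) - √p * (1 - p))
    (b := fun p => 2 + √p) ?_ ?_ ?_ ?_
  · exact ((by fun_prop : Continuous fun p : ℝ => 2 * √(1 - p) - √p * (1 - p)).tendsto' 0 2
      (by simp)).mono_left nhdsWithin_le_nhds
  · exact ((by fun_prop : Continuous fun p : ℝ => 2 + √p).tendsto' 0 2
      (by simp)).mono_left nhdsWithin_le_nhds
  · filter_upwards [self_mem_nhdsWithin] with p (hp : 0 < p)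
    positivity
  · filter_upwards [Ioo_mem_nhdsGT one_pos] with p hp
    obtain ⟨hpos, hmin⟩ := hND p hp
    have hsq := Real.sq_sqrt hp.1.le
    constructor
    · have := tDn_ge hp.1 hp.2 hpos
      nlinarith
    · have := hmin _ (ceil_div_mul_bounds one_pos (Real.sqrt_pos.2 hp.1)).1
      have := tDn_ceil_le hp.1 hp.2.le
      nlinarith

lemma tendsto_tSn_div_sqrt {NS : ℝ → ℕ}
    (hNS : ∀ p ∈ Set.Ioo (0:ℝ) 1, 0 < NS p ∧ ∀ M : ℕ, 0 < M → tSn (NS p) p ≤ tSn M p) :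
    Tendsto (fun p => tSn (NS p) p / √p) (𝓝[>] 0) (𝓝 √2) := by
  refine tendsto_div_of_squeeze (a := fun p => √(2 * (1 - 2 * p)))
    (b := fun p => √2 + 2 * √p) ?_ ?_ ?_ ?_
  · exact ((by fun_prop : Continuous fun p : ℝ => √(2 * (1 - 2 * p))).tendsto' 0 √2
      (by simp)).mono_left nhdsWithin_le_nhds
  · exact ((by fun_prop : Continuous fun p : ℝ => √2 + 2 * √p).tendsto' 0 √2
      (by simp)).mono_left nhdsWithin_le_nhds
  · filter_upwards [self_mem_nhdsWithin] with p (hp : 0 < p)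
    positivity
  · filter_upwards [Ioo_mem_nhdsGT (by norm_num : (0:ℝ) < 1 / 2)] with p hp
    obtain ⟨hpos, hmin⟩ := hNS p ⟨hp.1, by linarith [hp.2]⟩
    have hsq := Real.sq_sqrt hp.1.le
    refine ⟨tSn_ge hp.1 hp.2.le hpos, ?_⟩
    have := hmin _ (ceil_div_mul_bounds (a := √2) (by positivity) (Real.sqrt_pos.2 hp.1)).1
    have := tSn_ceil_le hp.1 (by linarith [hp.2])
    nlinarith

theorem stmt_19 (ND NS : ℝ → ℕ)
    (hND : ∀ p ∈ Set.Ioo (0:ℝ) 1, 0 < ND p ∧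
      ∀ M : ℕ, 0 < M → tDn (ND p) p ≤ tDn M p)
    (hNS : ∀ p ∈ Set.Ioo (0:ℝ) 1, 0 < NS p ∧
      ∀ M : ℕ, 0 < M → tSn (NS p) p ≤ tSn M p) :
    Tendsto (fun p : ℝ => tDn (ND p) p / tSn (NS p) p)
      (nhdsWithin 0 (Set.Ioi 0)) (nhds (Real.sqrt 2)) := by
  have h := (tendsto_tDn_div_sqrt hND).div (tendsto_tSn_div_sqrt hNS) (by positivity)
  rw [Real.div_sqrt] at h
  refine h.congr' ?_
  filter_upwards [self_mem_nhdsWithin] with p (hp : 0 < p)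
  exact div_div_div_cancel_right₀ (Real.sqrt_pos.2 hp).ne' _ _
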